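/- arXiv:2405.17674 — 2 statements merged into one kernel-verified Lean document; each statement's English description precedes it below -/
import Mathlib

section
/- For any sequence a₁,…,a_j ∈ {1,2}, let K_{a₁…a_j} = τ_h(rf(I_{a₁…a_j})) with h = Σ_{k=1}^{j} 8^{-k}, rf(S) = {1 - x : x ∈ S}, and τ_h(S) = {x + h : x ∈ S}; then both children-intervals K_{a₁…a_j 1} and K_{a₁…a_j 2} lie in the right half of K_{a₁…a_j}. -/
noncomputable def rhoStep (i : Bool) (p : ℝ × ℝ) : ℝ × ℝ :=
  if i then ((p.1+p.2)/2, (p.1+p.2)/2 + (p.2-p.1)/8)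
  else ((p.1+p.2)/2 - (p.2-p.1)/8, (p.1+p.2)/2)

/-- I_{a₁…a_k} = ρ_{a_k}∘⋯∘ρ_{a_1}([0,1]) as a pair of endpoints. -/
noncomputable def Ipair (l : List Bool) : ℝ × ℝ :=
  l.foldl (fun q i => rhoStep i q) ((0 : ℝ), 1)

/-- Left endpoint of K_{a₁…a_j} = τ_{Σ_{k=1}^j 8^{-k}}(rf(I_{a₁…a_j})). -/
noncomputable def Kleft (l : List Bool) : ℝ :=
  1 - (Ipair l).2 + ∑ k ∈ Finset.range l.length, ((8:ℝ)^(k+1))⁻¹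

/-- Right endpoint of K_{a₁…a_j}. -/
noncomputable def Kright (l : List Bool) : ℝ :=
  1 - (Ipair l).1 + ∑ k ∈ Finset.range l.length, ((8:ℝ)^(k+1))⁻¹

noncomputable def Kinterval (l : List Bool) : Set ℝ := Set.Icc (Kleft l) (Kright l)

lemma Ipair_append (l : List Bool) (i : Bool) :
    Ipair (l ++ [i]) = rhoStep i (Ipair l) := by
  simp [Ipair, List.foldl_append]

lemma Ipair_diff (l : List Bool) :
    (Ipair l).2 - (Ipair l).1 = ((8:ℝ)^l.length)⁻¹ := by
  induction l using List.reverseRecOn with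
  | nil => simp [Ipair]
  | append_singleton l i ih =>
    rw [Ipair_append]
    cases i <;> simp [rhoStep, pow_succ, mul_comm] <;>
      · rw [ih]; ring

/-- Both K_{a₁…a_j 1} and K_{a₁…a_j 2} lie in the right half of K_{a₁…a_j}. -/
theorem stmt2 (l : List Bool) (i : Bool) :
    Kinterval (l ++ [i]) ⊆ Set.Icc ((Kleft l + Kright l)/2) (Kright l) := by
  have hd := Ipair_diff l
  have hpos : (0:ℝ) < ((8:ℝ)^l.length)⁻¹ := by positivity
  have hsum : ∑ k ∈ Finset.range (l ++ [i]).length, ((8:ℝ)^(k+1))⁻¹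
      = (∑ k ∈ Finset.range l.length, ((8:ℝ)^(k+1))⁻¹) + ((8:ℝ)^(l.length+1))⁻¹ := by
    simp [Finset.sum_range_succ]
  have hp : ((8:ℝ)^(l.length+1))⁻¹ = ((8:ℝ)^l.length)⁻¹ / 8 := by
    rw [pow_succ, mul_inv]; ring
  apply Set.Icc_subset_Icc <;>
    · simp only [Kleft, Kright]
      rw [hsum, Ipair_append, hp]
      cases i <;> simp [rhoStep] <;> linarith

noncomputable def _check := Kinterval
end

section
/- The sequence defined by p_0 = 1 and p_{k+1} = p_k - p_k²/4 is strictly decreasing, stays in (0,1], and satisfies 2/(k+2) ≤ p_k ≤ 4/(k+1) for all k ≥ 1. -/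
theorem stmt8 (p : ℕ → ℝ) (h0 : p 0 = 1)
    (hrec : ∀ k, p (k+1) = p k - (p k)^2/4) :
    StrictAnti p ∧ (∀ k, 0 < p k ∧ p k ≤ 1) ∧
    ∀ k : ℕ, 1 ≤ k → 2 / (k + 2) ≤ p k ∧ p k ≤ 4 / (k + 1) := by
  have hpos : ∀ k, 0 < p k ∧ p k ≤ 1 := by
    intro k
    induction k with
    | zero => simp [h0]
    | succ n ih =>
      obtain ⟨h1, h2⟩ := ih
      rw [hrec]
      constructor
      · nlinarith
      · nlinarith
  have hbd : ∀ k : ℕ, 2/((k:ℝ)+2) ≤ p k ∧ p k ≤ 4/((k:ℝ)+4) := by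
    intro k
    induction k with
    | zero => norm_num [h0]
    | succ n ih =>
      obtain ⟨h1, h2⟩ := ih
      obtain ⟨hp0, hp1⟩ := hpos n
      have hn : (0:ℝ) ≤ n := Nat.cast_nonneg n
      have h2pos : (0:ℝ) < (n:ℝ) + 2 := by linarith
      have h4pos : (0:ℝ) < (n:ℝ) + 4 := by linarith
      have h1' : 2 ≤ p n * ((n:ℝ) + 2) := by
        rw [div_le_iff₀ h2pos] at h1; linarith [h1]
      have h2' : p n * ((n:ℝ) + 4) ≤ 4 := by
        rw [le_div_iff₀ h4pos] at h2; linarith [h2]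
      rw [hrec]
      push_cast
      constructor
      · rw [div_le_iff₀ (by linarith : (0:ℝ) < (n:ℝ) + 1 + 2)]
        nlinarith [mul_nonneg (by linarith : (0:ℝ) ≤ p n * ((n:ℝ)+2) - 2) (by linarith : (0:ℝ) ≤ 2 - p n)]
      · rw [le_div_iff₀ (by linarith : (0:ℝ) < (n:ℝ) + 1 + 4)]
        nlinarith [mul_nonneg (by linarith : (0:ℝ) ≤ 4 - p n * ((n:ℝ)+4)) (by linarith : (0:ℝ) ≤ 2 - p n)]
  refine ⟨?_, hpos, ?_⟩
  · apply strictAnti_nat_of_succ_lt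
    intro n
    have := (hpos n).1
    rw [hrec]
    nlinarith
  · intro k hk
    obtain ⟨h1, h2⟩ := hbd k
    refine ⟨h1, le_trans h2 ?_⟩
    have : (0:ℝ) < (k:ℝ) + 1 := by positivity
    rw [div_le_div_iff₀ (by linarith) this]
    have : (1:ℝ) ≤ k := by exact_mod_cast hk
    linarith
end
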